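/- Let L be a dense c.c.c. linear order. Then L is 2-entangled if and only if L is weakly 2-entangled. -/

import Mathlib

noncomputable def omega1 : Ordinal.{0} := (Cardinal.aleph 1).ord

/-- A linear order has the countable chain condition if there is no uncountable
family of pairwise disjoint nonempty open intervals. -/
def CCC (L : Type*) [LinearOrder L] : Prop :=
  ¬ ∃ I : Set (L × L), ¬ I.Countable ∧
    (∀ p ∈ I, ∃ c, p.1 < c ∧ c < p.2) ∧
    (∀ p ∈ I, ∀ r ∈ I, p ≠ r →
      ¬ ∃ c, (p.1 < c ∧ c < p.2) ∧ (r.1 < c ∧ c < r.2))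

/-- Separability: a countable set meeting every nonempty open interval. -/
def SeparableOrder (L : Type*) [LinearOrder L] : Prop :=
  ∃ D : Set L, D.Countable ∧ ∀ a b : L, a < b → (∃ c, a < c ∧ c < b) →
    ∃ d ∈ D, a < d ∧ d < b

/-- The first `n` coordinates of `t` form an increasing tuple. -/
def IncreasingTuple {L : Type*} [LinearOrder L] (n : ℕ) (t : ℕ → L) : Prop :=
  ∀ i j : ℕ, i < j → j < n → t i < t j

/-- The `n`-tuples of the sequence `a` (indexed by ordinals `< ω₁`) are pairwise
disjoint: no coordinate of one tuple equals any coordinate of another. -/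
def DisjointSeq {L : Type*} [LinearOrder L] (n : ℕ) (a : Ordinal → ℕ → L) : Prop :=
  ∀ ξ, ξ < omega1 → ∀ δ, δ < omega1 → ξ ≠ δ →
    ∀ i, i < n → ∀ j, j < n → a ξ i ≠ a δ j

/-- The sequence of `n`-tuples `a` realizes the type `g`. -/
def RealizesType {L : Type*} [LinearOrder L] (n : ℕ) (a : Ordinal → ℕ → L)
    (g : ℕ → Bool) : Prop :=
  ∃ ξ, ξ < omega1 ∧ ∃ δ, δ < omega1 ∧ ∀ i, i < n → (a ξ i < a δ i ↔ g i = true)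

/-- `L` is `n`-entangled. -/
def Entangled (L : Type*) [LinearOrder L] (n : ℕ) : Prop :=
  ∀ a : Ordinal → ℕ → L, (∀ ξ, ξ < omega1 → IncreasingTuple n (a ξ)) →
    DisjointSeq n a → ∀ g : ℕ → Bool, RealizesType n a g

/-- The sequence of increasing `n`-tuples is separated: there are
`c 0, …, c (n-2)` with `a ξ i < c i < a ξ (i+1)` for all `ξ < ω₁`. -/
def SeparatedSeq {L : Type*} [LinearOrder L] (n : ℕ) (a : Ordinal → ℕ → L) : Prop :=
  ∃ c : ℕ → L, ∀ ξ, ξ < omega1 → ∀ i, i + 1 < n →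
    a ξ i < c i ∧ c i < a ξ (i + 1)

/-- `L` is weakly `n`-entangled. -/
def WeaklyEntangled (L : Type*) [LinearOrder L] (n : ℕ) : Prop :=
  ∀ a : Ordinal → ℕ → L, (∀ ξ, ξ < omega1 → IncreasingTuple n (a ξ)) →
    DisjointSeq n a → SeparatedSeq n a → ∀ g : ℕ → Bool, RealizesType n a g

/-!
If some point `c` lies inside uncountably many of the intervals `(a ξ 0, a ξ 1)`, the subsequence
of those pairs is separated by `c`, and weak entangledness applies to it. Otherwise every point lies
in only countably many of the intervals, and a transfinite recursion of length `ω₁` extracts a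
subsequence along which, if there were no nested pair, the intervals would be pairwise disjoint,
and, if there were no pair increasing in both coordinates, the left endpoints would increase
strictly; in a dense order both contradict the c.c.c. A nested pair and an increasing pair
realize the three nonconstant types; the constant type `false, false` is realized by `ξ = δ`.
-/

open Set Cardinal Ordinal

lemma omega1_eq_omega_one : omega1 = ω₁ := ord_aleph 1

lemma omega1_pos : 0 < omega1 := omega1_eq_omega_one ▸ omega_pos 1

lemma add_one_lt_omega1 {α : Ordinal} (h : α < omega1) : α + 1 < omega1 := by
  rw [omega1_eq_omega_one] at *
  exact (isSuccLimit_omega 1).succ_lt h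

lemma countable_Iio_of_lt_omega1 {α : Ordinal} (h : α < omega1) : (Iio α).Countable := by
  rw [omega1_eq_omega_one, lt_omega_iff_card_lt, lt_aleph_one_iff] at h
  rw [← le_aleph0_iff_set_countable, Cardinal.mk_Iio_ordinal, lift_le_aleph0]
  exact h

lemma not_countable_Iio_omega1 : ¬ (Iio omega1).Countable := by
  rw [← le_aleph0_iff_set_countable, Cardinal.mk_Iio_ordinal, lift_le_aleph0,
    omega1_eq_omega_one, card_omega, ← lt_aleph_one_iff]
  exact lt_irrefl _

lemma exists_injOn_omega1_avoiding {S : Set Ordinal.{0}} (hS : ¬ S.Countable)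
    (B : Ordinal → Set Ordinal) (hB : ∀ ξ ∈ S, (B ξ).Countable) :
    ∃ f : Ordinal → Ordinal, MapsTo f (Iio omega1) S ∧ InjOn f (Iio omega1) ∧
      ∀ β γ, β < γ → γ < omega1 → f γ ∉ B (f β) := by
  let avoid (α : Ordinal) (f : ∀ β, β < α → Ordinal) : Set Ordinal :=
    ⋃ β, ⋃ h : β < α, insert (f β h) (B (f β h))
  let f : Ordinal → Ordinal := WellFoundedLT.fix fun α f => Classical.epsilon (· ∈ S \ avoid α f)
  have hf (α : Ordinal) : f α = Classical.epsilon (· ∈ S \ ⋃ β < α, insert (f β) (B (f β))) :=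
    WellFoundedLT.fix_eq _ α
  have hmem (α : Ordinal) (hα : α < omega1) : f α ∈ S \ ⋃ β < α, insert (f β) (B (f β)) := by
    induction α using WellFoundedLT.induction with
    | _ α IH =>
      have hcount : (⋃ β < α, insert (f β) (B (f β))).Countable :=
        (countable_Iio_of_lt_omega1 hα).biUnion fun β hβ =>
          (hB _ (IH β hβ (hβ.trans hα)).1).insert _
      rw [hf α]
      exact Classical.epsilon_spec (sdiff_nonempty.2 fun hsub => hS (hcount.mono hsub))
  have hnot (β γ : Ordinal) (hβγ : β < γ) (hγ : γ < omega1) : f γ ∉ insert (f β) (B (f β)) :=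
    fun h => (hmem γ hγ).2 (mem_biUnion hβγ h)
  refine ⟨f, fun α hα => (hmem α hα).1, fun β hβ γ hγ hfβγ => ?_,
    fun β γ hβγ hγ h => hnot β γ hβγ hγ (Or.inr h)⟩
  rcases lt_trichotomy β γ with h | h | h
  · exact absurd (Or.inl hfβγ.symm) (hnot β γ h hγ)
  · exact h
  · exact absurd (Or.inl hfβγ) (hnot γ β h hβ)

section Intervals

variable {L : Type*} [LinearOrder L]

lemma CCC.countable_of_pairwiseDisjoint (hL : CCC L) {ι : Type*} {s : Set ι} {p q : ι → L}
    (hne : ∀ i ∈ s, (Ioo (p i) (q i)).Nonempty)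
    (hd : s.PairwiseDisjoint fun i => Ioo (p i) (q i)) : s.Countable := by
  by_contra hs
  refine hL ⟨(fun i => (p i, q i)) '' s, fun himg => hs ?_, ?_, ?_⟩
  · refine countable_of_injective_of_countable_image (fun i hi j hj hij => ?_) himg
    by_contra hne'
    obtain ⟨c, hc⟩ := hne i hi
    have hpq : p i = p j ∧ q i = q j := Prod.ext_iff.1 hij
    exact (hd hi hj hne').le_bot ⟨hc, by simpa only [← hpq.1, ← hpq.2] using hc⟩
  · rintro _ ⟨i, hi, rfl⟩
    exact hne i hi
  · rintro _ ⟨i, hi, rfl⟩ _ ⟨j, hj, rfl⟩ hij ⟨c, hci, hcj⟩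
    exact (hd hi hj fun h => hij (h ▸ rfl)).le_bot ⟨hci, hcj⟩

lemma CCC.not_strictMonoOn_omega1 [DenselyOrdered L] (hL : CCC L) (f : Ordinal → L) :
    ¬ StrictMonoOn f (Iio omega1) := by
  intro hf
  have hsucc (γ : Ordinal) (hγ : γ < omega1) : f γ < f (γ + 1) :=
    hf hγ (add_one_lt_omega1 hγ) (lt_add_one γ)
  have hle (β γ : Ordinal) (hβγ : β < γ) (hγ : γ < omega1) : f (β + 1) ≤ f γ :=
    hf.monotoneOn (add_one_lt_omega1 (hβγ.trans hγ)) hγ (Order.add_one_le_of_lt hβγ)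
  refine not_countable_Iio_omega1 (hL.countable_of_pairwiseDisjoint (p := f)
    (q := fun γ => f (γ + 1)) (fun γ hγ => nonempty_Ioo.2 (hsucc γ hγ)) ?_)
  intro β hβ γ hγ hβγ
  rcases hβγ.lt_or_gt with h | h
  · exact disjoint_left.2 fun c hcβ hcγ => (hcβ.2.trans_le (hle β γ h hγ)).not_gt hcγ.1
  · exact disjoint_left.2 fun c hcβ hcγ => (hcγ.2.trans_le (hle γ β h hβ)).not_gt hcβ.1

def IsPointCountable (p q : Ordinal → L) : Prop :=
  ∀ c, {ξ | ξ < omega1 ∧ c ∈ Ioo (p ξ) (q ξ)}.Countable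

variable {p q : Ordinal → L}

lemma exists_nested_of_isPointCountable [DenselyOrdered L] (hL : CCC L)
    (hpq : ∀ ξ < omega1, p ξ < q ξ) (hp : InjOn p (Iio omega1)) (hq : InjOn q (Iio omega1))
    (hpc : IsPointCountable p q) : ∃ ξ < omega1, ∃ δ < omega1, p ξ < p δ ∧ q δ < q ξ := by
  by_contra! hno
  obtain ⟨f, hfS, hfinj, hfB⟩ := exists_injOn_omega1_avoiding not_countable_Iio_omega1
    (fun ξ => {δ | δ < omega1 ∧ p ξ ∈ Ioo (p δ) (q δ)} ∪ {δ | δ < omega1 ∧ q ξ ∈ Ioo (p δ) (q δ)})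
    fun ξ _ => (hpc (p ξ)).union (hpc (q ξ))
  refine not_countable_Iio_omega1 (hL.countable_of_pairwiseDisjoint (p := p ∘ f) (q := q ∘ f)
    (fun γ hγ => nonempty_Ioo.2 (hpq _ (hfS hγ))) ?_)
  intro β hβ γ hγ hβγ
  wlog hlt : β < γ generalizing β γ
  · exact (this hγ hβ hβγ.symm (hβγ.lt_or_gt.resolve_left hlt)).symm
  have hfγ : f γ ∉ _ := hfB β γ hlt hγ
  have hfβγ : f β ≠ f γ := hfinj.ne hβ hγ hβγ
  refine disjoint_left.2 fun c ⟨hc₁, hc₂⟩ ⟨hc₃, hc₄⟩ => ?_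
  simp only [Function.comp_apply] at hc₁ hc₂ hc₃ hc₄
  rcases lt_trichotomy (p (f β)) (p (f γ)) with h | h | h
  · have hqq : q (f β) < q (f γ) :=
      (hno _ (hfS hβ) _ (hfS hγ) h).lt_of_ne (hq.ne (hfS hβ) (hfS hγ) hfβγ)
    exact hfγ (Or.inr ⟨hfS hγ, hc₃.trans hc₂, hqq⟩)
  · exact hp.ne (hfS hβ) (hfS hγ) hfβγ h
  · exact hfγ (Or.inl ⟨hfS hγ, h, hc₁.trans hc₄⟩)

lemma exists_increasing_of_isPointCountable [DenselyOrdered L] (hL : CCC L)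
    (hpq : ∀ ξ < omega1, p ξ < q ξ) (hp : InjOn p (Iio omega1))
    (hpc : IsPointCountable p q) : ∃ ξ < omega1, ∃ δ < omega1, p ξ < p δ ∧ q ξ < q δ := by
  by_contra! hno
  have hB (ξ : Ordinal) (hξ : ξ ∈ Iio omega1) : {δ | δ < omega1 ∧ p δ < p ξ}.Countable := by
    obtain ⟨c, hc⟩ := nonempty_Ioo.2 (hpq ξ hξ)
    refine (hpc c).mono ?_
    rintro δ ⟨hδ, hδξ⟩
    exact ⟨hδ, hδξ.trans hc.1, hc.2.trans_le (hno δ hδ ξ hξ hδξ)⟩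
  obtain ⟨f, hfS, hfinj, hfB⟩ := exists_injOn_omega1_avoiding not_countable_Iio_omega1
    (fun ξ => {δ | δ < omega1 ∧ p δ < p ξ}) hB
  refine hL.not_strictMonoOn_omega1 (p ∘ f) fun β hβ γ hγ hβγ => ?_
  have hne : p (f β) ≠ p (f γ) := hp.ne (hfS hβ) (hfS hγ) (hfinj.ne hβ hγ hβγ.ne)
  exact hne.lt_of_le (not_lt.1 fun h => hfB β γ hβγ hγ (show _ ∧ _ from ⟨hfS hγ, h⟩))

end Intervals

section Sequences

variable {L : Type*} [LinearOrder L] {n : ℕ} {a : Ordinal → ℕ → L}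

lemma DisjointSeq.injOn (hd : DisjointSeq n a) {i : ℕ} (hi : i < n) :
    InjOn (a · i) (Iio omega1) :=
  fun ξ hξ δ hδ h => by_contra fun hne => hd ξ hξ δ hδ hne i hi i hi h

lemma DisjointSeq.comp (hd : DisjointSeq n a) {f : Ordinal → Ordinal}
    (hfmaps : MapsTo f (Iio omega1) (Iio omega1)) (hfinj : InjOn f (Iio omega1)) :
    DisjointSeq n (a ∘ f) :=
  fun _ hξ _ hδ hne => hd _ (hfmaps hξ) _ (hfmaps hδ) (hfinj.ne hξ hδ hne)

lemma RealizesType.of_comp {f : Ordinal → Ordinal} (hfmaps : MapsTo f (Iio omega1) (Iio omega1))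
    {g : ℕ → Bool} (h : RealizesType n (a ∘ f) g) : RealizesType n a g := by
  obtain ⟨ξ, hξ, δ, hδ, hξδ⟩ := h
  exact ⟨f ξ, hfmaps hξ, f δ, hfmaps hδ, hξδ⟩

lemma realizesType_two_iff {g : ℕ → Bool} : RealizesType 2 a g ↔
    ∃ ξ < omega1, ∃ δ < omega1, (a ξ 0 < a δ 0 ↔ g 0) ∧ (a ξ 1 < a δ 1 ↔ g 1) := by
  simp only [RealizesType, Nat.lt_succ_iff, Nat.le_one_iff_eq_zero_or_eq_one, or_imp, forall_and,
    forall_eq]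

lemma WeaklyEntangled.realizesType_of_not_isPointCountable (hw : WeaklyEntangled L 2)
    (hinc : ∀ ξ, ξ < omega1 → IncreasingTuple 2 (a ξ)) (hd : DisjointSeq 2 a)
    (hpc : ¬ IsPointCountable (a · 0) (a · 1)) (g : ℕ → Bool) : RealizesType 2 a g := by
  obtain ⟨c, hc⟩ := not_forall.1 hpc
  obtain ⟨f, hfS, hfinj, -⟩ :=
    exists_injOn_omega1_avoiding hc (fun _ => ∅) fun _ _ => countable_empty
  have hfmaps : MapsTo f (Iio omega1) (Iio omega1) := fun ξ hξ => (hfS hξ).1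
  refine (hw (a ∘ f) (fun ξ hξ => hinc _ (hfmaps hξ)) (hd.comp hfmaps hfinj)
    ⟨fun _ => c, fun ξ hξ i hi => ?_⟩ g).of_comp hfmaps
  obtain rfl : i = 0 := by omega
  exact (hfS hξ).2

end Sequences

/-- for a dense c.c.c. linear order, 2-entangled ↔ weakly 2-entangled. -/
theorem stmt4 (L : Type*) [LinearOrder L] [DenselyOrdered L] (h : CCC L) :
    Entangled L 2 ↔ WeaklyEntangled L 2 := by
  refine ⟨fun he a hinc hd _ => he a hinc hd, fun hw a hinc hd g => ?_⟩
  by_cases hpc : IsPointCountable (a · 0) (a · 1)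
  · have hlt : ∀ ξ < omega1, a ξ 0 < a ξ 1 := fun ξ hξ => hinc ξ hξ 0 1 zero_lt_one one_lt_two
    obtain ⟨ξ₁, hξ₁, δ₁, hδ₁, hp₁, hq₁⟩ := exists_nested_of_isPointCountable h hlt
      (hd.injOn two_pos) (hd.injOn one_lt_two) hpc
    obtain ⟨ξ₂, hξ₂, δ₂, hδ₂, hp₂, hq₂⟩ :=
      exists_increasing_of_isPointCountable h hlt (hd.injOn two_pos) hpc
    rw [realizesType_two_iff]
    cases g 0 <;> cases g 1
    · exact ⟨0, omega1_pos, 0, omega1_pos, by simp⟩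
    · exact ⟨δ₁, hδ₁, ξ₁, hξ₁, by simp [hp₁.asymm, hq₁]⟩
    · exact ⟨ξ₁, hξ₁, δ₁, hδ₁, by simp [hp₁, hq₁.asymm]⟩
    · exact ⟨ξ₂, hξ₂, δ₂, hδ₂, by simp [hp₂, hq₂]⟩
  · exact hw.realizesType_of_not_isPointCountable hinc hd hpc g
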